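/- Assume Hypothesis 7.1 holds for the subset I ⊆ S, and let u, v ∈ U^I_min. (i) If u ≠ v, then there is no ν ∈ ℕ^N with Σ_{j=1}^N ν_j·a_j^+ = p·u − v such that ν = (p−1)·(e_1 + ⋯ + e_{μ_I}) + p·e_{μ_I+k_u} − e_{μ_I+k_v}. (ii) If u = v, then the vector ν ∈ ℕ^N with ν_j = p−1 for j ∈ {1, …, μ_I} ∪ {μ_I + k_u} and ν_j = 0 otherwise satisfies Σ_{j=1}^N ν_j·a_j^+ = p·u − u = (p−1)·u, so the monomial Λ_1^{p−1} ⋯ Λ_{μ_I}^{p−1}·Λ_{μ_I+k_u}^{p−1} occurs in Ā^I_{uu}(Λ) with coefficient (−1)^{μ_I+1}·((p−1)!)^{−(μ_I+1)} in 𝔽_p, which is nonzero. -/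

import Mathlib

/-- `a_j⁺ = (a_{0j}, …, a_{nj}, 1) ∈ ℕ^{n+2}`. -/
def aplus {n N : ℕ} (a : Fin N → Fin (n + 1) → ℕ) (j : Fin N) : Fin (n + 2) → ℕ :=
  Fin.snoc (a j) 1

/-!
Since `k_u` determines `u`, for `u ≠ v` we have `k_u ≠ k_v`, so the prescribed `ν` has the entry
`−1` at position `μ + k_v` and cannot lie in `ℕ^N`. For `u = v`, Hypothesis 7.1 writes `u` as the sum of the `μ + 1`
vectors `a_j⁺` with `j < μ` or `j = μ + k_u`, so `ν = (p − 1)·(indicator of these j)` solves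
`∑ ν_j a_j⁺ = (p − 1)·u`. Its coefficient is `(−1)^{μ+1}((p − 1)!)^{−(μ+1)}`, which by Wilson's
theorem `(p − 1)! = −1` equals `1` in `𝔽_p`.
-/

open Finset

@[to_additive]
theorem Fin.prod_ite_lt_or_eq {M : Type*} [CommMonoid M] {N μ k : ℕ} (hk : μ ≤ k) (hkN : k < N)
    (f : Fin N → M) :
    ∏ j : Fin N, (if (j : ℕ) < μ ∨ (j : ℕ) = k then f j else 1)
      = f ⟨k, hkN⟩ * ∏ t : Fin μ, f ⟨t, by omega⟩ := by
  have hfilter : univ.filter (fun j : Fin N => (j : ℕ) < μ ∨ (j : ℕ) = k)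
      = insert ⟨k, hkN⟩ (univ.map (Fin.castLEEmb (hk.trans hkN.le))) := by
    ext j
    simp only [mem_filter, mem_univ, true_and, mem_insert, mem_map, Fin.castLEEmb_apply,
      Fin.ext_iff, Fin.val_castLE]
    constructor
    · rintro (h | h)
      · exact Or.inr ⟨⟨j, h⟩, rfl⟩
      · exact Or.inl h
    · rintro (h | ⟨t, ht⟩)
      · exact Or.inr h
      · exact Or.inl (ht ▸ t.isLt)
  rw [← prod_filter, hfilter, prod_insert (by simp [Fin.ext_iff]; omega), prod_map]
  rfl

theorem ZMod.neg_one_pow_mul_inv_factorial_pow (p k : ℕ) [Fact p.Prime] :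
    (-1) ^ k * (((p - 1).factorial : ZMod p))⁻¹ ^ k = 1 := by
  rw [ZMod.wilsons_lemma, inv_neg, inv_one, ← mul_pow, neg_one_mul, neg_neg, one_pow]

theorem not_forall_natCast_eq_sub_of_ne {N μ k l : ℕ} {p : ℤ} (hkl : k ≠ l) (hlN : μ + l < N)
    (ν : Fin N → ℕ) :
    ¬ ∀ j : Fin N, (ν j : ℤ) = (if (j : ℕ) < μ then p - 1 else 0)
      + (if (j : ℕ) = μ + k then p else 0) - (if (j : ℕ) = μ + l then 1 else 0) := by
  intro h
  have hl := h ⟨μ + l, hlN⟩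
  rw [if_neg (by simp), if_neg (by simp; omega), if_pos rfl] at hl
  omega

/-- Lemma 7.6: under Hypothesis 7.1, for `u = umin r`, `v = umin c`
in `U^I_min`:
(i) if `u ≠ v`, no `ν ∈ ℕ^N` with `∑_j ν_j a_j⁺ = p·u − v` equals
`(p−1)(e₁+⋯+e_{μ_I}) + p·e_{μ_I+k_u} − e_{μ_I+k_v}`;
(ii) if `u = v`, the vector `ν` with `ν_j = p−1` for `j ∈ {1,…,μ_I} ∪ {μ_I+k_u}` and
`ν_j = 0` otherwise satisfies `∑_j ν_j a_j⁺ = p·u − u`, so the monomial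
`Λ₁^{p−1}⋯Λ_{μ_I}^{p−1}·Λ_{μ_I+k_u}^{p−1}` occurs in `Ā^I_{uu}` with the nonzero
coefficient `(−1)^{μ_I+1}((p−1)!)^{−(μ_I+1)}` in `𝔽_p`. -/
theorem stmt_11 (p n N : ℕ) (hp : p.Prime)
    (a : Fin N → Fin (n + 1) → ℕ)
    (μ m : ℕ)
    (umin : Fin m → Fin (n + 2) → ℕ)
    (hNm : μ + m ≤ N)
    (κ : Fin m → Fin m)
    (hκ : ∀ r : Fin m, ∀ i : Fin (n + 2),
      umin r i = aplus a ⟨μ + (κ r : ℕ), by have := (κ r).isLt; omega⟩ i +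
        ∑ t : Fin μ, aplus a ⟨(t : ℕ), by have := t.isLt; omega⟩ i)
    (r c : Fin m)
    (A : MvPolynomial (Fin N) (ZMod p))
    (hA : ∀ m' : Fin N →₀ ℕ, A.coeff m' =
      if (∀ j, m' j ≤ p - 1) ∧
          (∀ i : Fin (n + 2), ∑ j, (m' j : ℤ) * (aplus a j i : ℤ)
            = p * umin r i - umin r i)
      then (-1) ^ (μ + 1) * (∏ j, ((m' j).factorial : ZMod p))⁻¹
      else 0) :
    (umin r ≠ umin c → ∀ ν : Fin N → ℕ,
      (∀ i : Fin (n + 2), ∑ j, (ν j : ℤ) * (aplus a j i : ℤ) = p * umin r i - umin c i) →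
      ¬ (∀ j : Fin N, (ν j : ℤ) = (if (j : ℕ) < μ then (p : ℤ) - 1 else 0)
          + (if (j : ℕ) = μ + (κ r : ℕ) then (p : ℤ) else 0)
          - (if (j : ℕ) = μ + (κ c : ℕ) then 1 else 0))) ∧
    (∀ ν : Fin N → ℕ,
      (∀ j : Fin N, ν j = if (j : ℕ) < μ ∨ (j : ℕ) = μ + (κ r : ℕ) then p - 1 else 0) →
      (∀ i : Fin (n + 2),
        ∑ j, (ν j : ℤ) * (aplus a j i : ℤ) = p * umin r i - umin r i) ∧
      A.coeff (Finsupp.equivFunOnFinite.symm ν)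
          = (-1) ^ (μ + 1) * (((p - 1).factorial : ZMod p))⁻¹ ^ (μ + 1) ∧
      A.coeff (Finsupp.equivFunOnFinite.symm ν) ≠ 0) := by
  have : Fact p.Prime := ⟨hp⟩
  have hkN : ∀ s : Fin m, μ + (s : ℕ) < N := fun s => by have := s.isLt; omega
  refine ⟨fun hne ν _ => not_forall_natCast_eq_sub_of_ne ?_ (hkN (κ c)) ν, fun ν hν => ?_⟩
  · intro hκrc
    exact hne (funext fun i => by rw [hκ r i, hκ c i]; simp only [hκrc])
  have hsum : ∀ i, ∑ j, (ν j : ℤ) * (aplus a j i : ℤ) = p * umin r i - umin r i := by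
    intro i
    simp only [hν, Nat.cast_ite, Nat.cast_sub hp.one_le, Nat.cast_one, Nat.cast_zero, ite_mul,
      zero_mul]
    rw [Fin.sum_ite_lt_or_eq (by omega) (hkN (κ r)), hκ r i]
    push_cast [← mul_sum]
    ring
  have hprod : ∏ j, ((ν j).factorial : ZMod p) = ((p - 1).factorial : ZMod p) ^ (μ + 1) := by
    simp only [hν, apply_ite Nat.factorial, apply_ite (Nat.cast (R := ZMod p)), Nat.factorial_zero,
      Nat.cast_one]
    rw [Fin.prod_ite_lt_or_eq (by omega) (hkN (κ r)), prod_const, card_univ, Fintype.card_fin,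
      pow_succ']
  have hcoeff : A.coeff (Finsupp.equivFunOnFinite.symm ν)
      = (-1) ^ (μ + 1) * (((p - 1).factorial : ZMod p))⁻¹ ^ (μ + 1) := by
    simp only [hA, Finsupp.equivFunOnFinite_symm_apply_apply]
    rw [if_pos ⟨fun j => by rw [hν j]; split <;> omega, hsum⟩, hprod, inv_pow]
  refine ⟨hsum, hcoeff, ?_⟩
  rw [hcoeff, ZMod.neg_one_pow_mul_inv_factorial_pow]
  exact one_ne_zero
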